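/- Let V and W be varieties of Ω-algebras of the same type without nullary operation symbols, and let Σ be an equational base of V. Then the variety H(V ∘ W) generated by the Mal'tsev product V ∘ W is exactly the variety defined by the set of identities Σ^p. -/

import Mathlib

structure Signature where
  symbols : Type
  arity : symbols → ℕ

structure Alg (S : Signature) where
  carrier : Type
  op : ∀ ω : S.symbols, (Fin (S.arity ω) → carrier) → carrier
  nonempty : Nonempty carrier

inductive Term (S : Signature) (X : Type) : Type
  | var : X → Term S X
  | app : ∀ ω : S.symbols, (Fin (S.arity ω) → Term S X) → Term S X

def Term.eval {S : Signature} {X : Type} (A : Alg S) (env : X → A.carrier) :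
    Term S X → A.carrier
  | .var x => env x
  | .app ω ts => A.op ω fun i => (ts i).eval A env

/-- The algebra `A` satisfies the identity `u = v`. -/
def Alg.sat {S : Signature} (A : Alg S) {X : Type} (u v : Term S X) : Prop :=
  ∀ env : X → A.carrier, u.eval A env = v.eval A env

/-- An identity: a pair of terms in the countably many variables `x₀, x₁, …`. -/
abbrev Ident (S : Signature) := Term S ℕ × Term S ℕ

/-- `A` lies in the variety axiomatized by the set of identities `E`. -/
def Alg.Models {S : Signature} (A : Alg S) (E : Set (Ident S)) : Prop :=
  ∀ e ∈ E, A.sat e.1 e.2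

/-- The identity `u = v` holds in the variety axiomatized by `E`. -/
def Conseq {S : Signature} (E : Set (Ident S)) {X : Type} (u v : Term S X) : Prop :=
  ∀ A : Alg S, A.Models E → A.sat u v

/-- `a` is an idempotent element of `A`. -/
def Alg.IsIdem {S : Signature} (A : Alg S) (a : A.carrier) : Prop :=
  ∀ ω : S.symbols, A.op ω (fun _ => a) = a

/-- `B` is (the universe of) a subalgebra of `A`. -/
def Alg.IsSubuniverse {S : Signature} (A : Alg S) (B : Set A.carrier) : Prop :=
  ∀ ω (a : Fin (S.arity ω) → A.carrier), (∀ i, a i ∈ B) → A.op ω a ∈ B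

/-- The subalgebra of `A` on a nonempty subuniverse `B`. -/
def Alg.subAlg {S : Signature} (A : Alg S) (B : Set A.carrier)
    (h : A.IsSubuniverse B) (hne : B.Nonempty) : Alg S where
  carrier := B
  op ω a := ⟨A.op ω fun i => (a i : A.carrier), h ω _ fun i => (a i).2⟩
  nonempty := hne.to_subtype

/-- A congruence of `A`: an equivalence relation compatible with all operations. -/
structure Congruence {S : Signature} (A : Alg S) where
  rel : A.carrier → A.carrier → Prop
  iseqv : Equivalence rel
  compat : ∀ ω (a b : Fin (S.arity ω) → A.carrier),
    (∀ i, rel (a i) (b i)) → rel (A.op ω a) (A.op ω b)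

def Congruence.setoid {S : Signature} {A : Alg S} (θ : Congruence A) :
    Setoid A.carrier := ⟨θ.rel, θ.iseqv⟩

/-- The quotient algebra `A/θ`. -/
noncomputable def Alg.quot {S : Signature} (A : Alg S) (θ : Congruence A) : Alg S where
  carrier := Quotient θ.setoid
  op ω q := Quotient.mk θ.setoid (A.op ω fun i => (q i).out)
  nonempty := A.nonempty.map (Quotient.mk θ.setoid)

/-- Membership in the Mal'tsev product of the varieties axiomatized by `V` and `W`:
`A` has a congruence `θ` with `A/θ` in (the variety of) `W` such that every
`θ`-class which is a subalgebra of `A` is an algebra in (the variety of) `V`. -/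
def InMaltsev {S : Signature} (V W : Set (Ident S)) (A : Alg S) : Prop :=
  ∃ θ : Congruence A, (A.quot θ).Models W ∧
    ∀ a : A.carrier, ∀ h : A.IsSubuniverse {b | θ.rel a b},
      (A.subAlg {b | θ.rel a b} h ⟨a, θ.iseqv.refl a⟩).Models V

/-- A class of algebras is a variety iff it is axiomatized by some set of identities. -/
def IsVarietyClass {S : Signature} (K : Alg S → Prop) : Prop :=
  ∃ E : Set (Ident S), ∀ A : Alg S, K A ↔ A.Models E

def Term.subst {S : Signature} {X Y : Type} (f : X → Term S Y) :
    Term S X → Term S Y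
  | .var x => f x
  | .app ω ts => .app ω fun i => (ts i).subst f

/-- The set `σᵖ` of identities obtained from the identity `σ` by substituting for
its variables pairwise `W`-equivalent term idempotents of (the variety of) `W`. -/
def sigmaP {S : Signature} (W : Set (Ident S)) (σ : Ident S) : Set (Ident S) :=
  { e | ∃ r : ℕ → Term S ℕ,
      (∀ i j : ℕ, Conseq W (r i) (r j)) ∧
      (∀ ω : S.symbols, Conseq W (Term.app ω fun _ => r 0) (r 0)) ∧
      e = (σ.1.subst r, σ.2.subst r) }

/-- `Σᵖ = ⋃_{σ ∈ Σ} σᵖ`. -/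
def SigmaP {S : Signature} (W : Set (Ident S)) (Sg : Set (Ident S)) :
    Set (Ident S) :=
  ⋃ σ ∈ Sg, sigmaP W σ

/-! The models of `Σᵖ` satisfy every identity of `V ∘ W`, because `Σᵖ` holds in `V ∘ W`: if
`B` has a congruence `θ` as in the definition and `r₁, …, r_k` are `W`-equivalent idempotent
terms, then the values of the `rᵢ` lie in one `θ`-class, which is a subalgebra and hence lies in
`V`, so `σ` holds at them. Conversely the free algebra `F` of `Mod(Σᵖ)` lies in `V ∘ W`: factor
`F` by the congruence of `W`-equivalence of terms; a class that is a subalgebra consists of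
pairwise `W`-equivalent term idempotents of `W`, so `Σᵖ` makes it satisfy `Σ`, i.e. lie in `V`.
Hence an identity true in `V ∘ W` holds in `F`, so it follows from `Σᵖ`. -/

variable {S : Signature}

namespace Term

theorem eval_subst {X Y : Type} (A : Alg S) (f : X → Term S Y) (env : Y → A.carrier) :
    ∀ t : Term S X, (t.subst f).eval A env = t.eval A fun x => (f x).eval A env
  | .var _ => rfl
  | .app ω ts => congrArg (A.op ω) (funext fun i => eval_subst A f env (ts i))

theorem subst_var {X : Type} : ∀ t : Term S X, t.subst Term.var = t
  | .var _ => rfl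
  | .app ω ts => congrArg (Term.app ω) (funext fun i => subst_var (ts i))

theorem eval_const_of_isIdem {X : Type} (A : Alg S) {a : A.carrier} (ha : A.IsIdem a) :
    ∀ t : Term S X, t.eval A (fun _ => a) = a
  | .var _ => rfl
  | .app ω ts => by
    change A.op ω (fun i => (ts i).eval A fun _ => a) = a
    simp only [eval_const_of_isIdem A ha, ha ω]

end Term

namespace Conseq

variable {E : Set (Ident S)} {X : Type}

theorem refl (u : Term S X) : Conseq E u u := fun _ _ _ => rfl

theorem symm {u v : Term S X} (h : Conseq E u v) : Conseq E v u :=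
  fun A hA env => (h A hA env).symm

theorem trans {u v w : Term S X} (h₁ : Conseq E u v) (h₂ : Conseq E v w) : Conseq E u w :=
  fun A hA env => (h₁ A hA env).trans (h₂ A hA env)

theorem equivalence : Equivalence (Conseq E (X := X)) := ⟨refl, symm, trans⟩

theorem app (ω : S.symbols) {a b : Fin (S.arity ω) → Term S X}
    (h : ∀ i, Conseq E (a i) (b i)) : Conseq E (Term.app ω a) (Term.app ω b) :=
  fun A hA env => congrArg (A.op ω) (funext fun i => h i A hA env)

theorem subst {Y : Type} {u v : Term S X} (h : Conseq E u v) (f : X → Term S Y) :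
    Conseq E (u.subst f) (v.subst f) := fun A hA env => by
  rw [Term.eval_subst, Term.eval_subst]
  exact h A hA _

theorem of_models_imp {F : Set (Ident S)} (hFE : ∀ A : Alg S, A.Models F → A.Models E)
    {u v : Term S X} (h : Conseq E u v) : Conseq F u v :=
  fun A hA => h A (hFE A hA)

end Conseq

theorem Alg.val_eval_subAlg {X : Type} (A : Alg S) {B : Set A.carrier} (h : A.IsSubuniverse B)
    (hne : B.Nonempty) (env : X → (A.subAlg B h hne).carrier) :
    ∀ t : Term S X, (t.eval (A.subAlg B h hne) env).val = t.eval A fun x => (env x).val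
  | .var _ => rfl
  | .app ω ts => congrArg (A.op ω) (funext fun i => val_eval_subAlg A h hne env (ts i))

namespace Congruence

variable {A : Alg S}

theorem rel_out_mk (θ : Congruence A) (a : A.carrier) :
    θ.rel (Quotient.mk θ.setoid a).out a :=
  Quotient.mk_out (s := θ.setoid) a

theorem isSubuniverse_class (θ : Congruence A) {a : A.carrier}
    (ha : ∀ ω, θ.rel a (A.op ω fun _ => a)) : A.IsSubuniverse {b | θ.rel a b} :=
  fun ω _ hb => θ.iseqv.trans (ha ω) (θ.compat ω _ _ hb)

def quotient (ψ θ : Congruence A) (hle : ∀ a b, θ.rel a b → ψ.rel a b) :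
    Congruence (A.quot θ) where
  rel p q := ψ.rel p.out q.out
  iseqv := ⟨fun _ => ψ.iseqv.refl _, ψ.iseqv.symm, ψ.iseqv.trans⟩
  compat ω _ _ h :=
    ψ.iseqv.trans (hle _ _ (θ.rel_out_mk _))
      (ψ.iseqv.trans (ψ.compat ω _ _ h) (ψ.iseqv.symm (hle _ _ (θ.rel_out_mk _))))

theorem quotient_rel_mk {ψ θ : Congruence A} {hle : ∀ a b, θ.rel a b → ψ.rel a b}
    {p : (A.quot θ).carrier} {b : A.carrier} :
    (ψ.quotient θ hle).rel p (Quotient.mk θ.setoid b) ↔ ψ.rel p.out b :=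
  ⟨fun h => ψ.iseqv.trans h (hle _ _ (θ.rel_out_mk b)),
    fun h => ψ.iseqv.trans h (ψ.iseqv.symm (hle _ _ (θ.rel_out_mk b)))⟩

theorem quotient_rel_mk_mk {ψ θ : Congruence A} {hle : ∀ a b, θ.rel a b → ψ.rel a b}
    {a b : A.carrier} :
    (ψ.quotient θ hle).rel (Quotient.mk θ.setoid a) (Quotient.mk θ.setoid b) ↔ ψ.rel a b :=
  quotient_rel_mk.trans
    ⟨ψ.iseqv.trans (ψ.iseqv.symm (hle _ _ (θ.rel_out_mk a))),
      ψ.iseqv.trans (hle _ _ (θ.rel_out_mk a))⟩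

end Congruence

namespace Alg

variable {X : Type} (A : Alg S) (θ : Congruence A)

theorem eval_quot_mk (e : X → A.carrier) :
    ∀ t : Term S X,
      t.eval (A.quot θ) (fun x => (Quotient.mk θ.setoid (e x) : (A.quot θ).carrier))
        = Quotient.mk θ.setoid (t.eval A e)
  | .var _ => rfl
  | .app ω ts => Quotient.sound <| θ.compat ω _ _ fun i => by
    have h := θ.rel_out_mk ((ts i).eval A e)
    rwa [← eval_quot_mk e (ts i)] at h

theorem quot_sat_iff {u v : Term S X} :
    (A.quot θ).sat u v ↔ ∀ e : X → A.carrier, θ.rel (u.eval A e) (v.eval A e) := by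
  refine ⟨fun h e => Quotient.exact (s := θ.setoid) ?_, fun h env => ?_⟩
  · rw [← eval_quot_mk, ← eval_quot_mk]
    exact h _
  · rw [← funext fun x => Quotient.out_eq (env x), eval_quot_mk, eval_quot_mk]
    exact Quotient.sound (h _)

end Alg

def termAlg (S : Signature) (X : Type) [Nonempty X] : Alg S where
  carrier := Term S X
  op := Term.app
  nonempty := ‹Nonempty X›.map Term.var

section FreeAlgebra

variable {X : Type} [Nonempty X]

theorem Term.eval_termAlg (f : X → Term S X) :
    ∀ t : Term S X, t.eval (termAlg S X) f = t.subst f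
  | .var _ => rfl
  | .app ω ts => congrArg (Term.app ω) (funext fun i => eval_termAlg f (ts i))

def conseqCongr (E : Set (Ident S)) (X : Type) [Nonempty X] : Congruence (termAlg S X) where
  rel := Conseq E
  iseqv := Conseq.equivalence
  compat ω _ _ := Conseq.app ω

noncomputable abbrev freeAlg (E : Set (Ident S)) (X : Type) [Nonempty X] : Alg S :=
  (termAlg S X).quot (conseqCongr E X)

variable {E : Set (Ident S)}

theorem eval_freeAlg (env : X → (freeAlg E X).carrier) (t : Term S X) :
    t.eval (freeAlg E X) env
      = Quotient.mk (conseqCongr E X).setoid (t.subst fun x => (env x).out) := by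
  have h := Alg.eval_quot_mk _ (conseqCongr E X) (fun x => (env x).out) t
  rw [funext fun x => Quotient.out_eq (env x)] at h
  exact h.trans (congrArg _ (Term.eval_termAlg _ t))

theorem conseq_of_freeAlg_sat {u v : Term S X} (h : (freeAlg E X).sat u v) : Conseq E u v := by
  have := (Alg.quot_sat_iff _ _).mp h Term.var
  rwa [Term.eval_termAlg, Term.eval_termAlg, Term.subst_var, Term.subst_var] at this

end FreeAlgebra

section MaltsevProduct

variable (V W Sg : Set (Ident S))

theorem models_sigmaP_of_models {B : Alg S} (hB : B.Models W) : B.Models (SigmaP W Sg) := by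
  intro e he env
  simp only [SigmaP, Set.mem_iUnion] at he
  obtain ⟨σ, -, r, hr, hidem, rfl⟩ := he
  have ha : B.IsIdem ((r 0).eval B env) := fun ω => hidem ω B hB env
  have hconst : (fun i => (r i).eval B env) = fun _ => (r 0).eval B env :=
    funext fun i => hr i 0 B hB env
  change (σ.1.subst r).eval B env = (σ.2.subst r).eval B env
  rw [Term.eval_subst, Term.eval_subst, hconst, Term.eval_const_of_isIdem B ha,
    Term.eval_const_of_isIdem B ha]

theorem models_sigmaP_of_inMaltsev (hbase : ∀ A : Alg S, A.Models V ↔ A.Models Sg)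
    {B : Alg S} (hB : InMaltsev V W B) : B.Models (SigmaP W Sg) := by
  obtain ⟨θ, hW, hV⟩ := hB
  intro e he env
  simp only [SigmaP, Set.mem_iUnion] at he
  obtain ⟨σ, hσ, r, hr, hidem, rfl⟩ := he
  have hrel {t s : Term S ℕ} (h : Conseq W t s) : θ.rel (t.eval B env) (s.eval B env) :=
    (Alg.quot_sat_iff B θ).mp (h _ hW) env
  have hsub : B.IsSubuniverse {b | θ.rel ((r 0).eval B env) b} :=
    θ.isSubuniverse_class fun ω => θ.iseqv.symm (hrel (hidem ω))
  let env' (i : ℕ) : (B.subAlg _ hsub ⟨_, θ.iseqv.refl _⟩).carrier :=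
    ⟨(r i).eval B env, hrel (hr 0 i)⟩
  have hσV := (hbase _).mp (hV _ hsub) σ hσ env'
  have hval := Alg.val_eval_subAlg B hsub _ env'
  change (σ.1.subst r).eval B env = (σ.2.subst r).eval B env
  rw [Term.eval_subst, Term.eval_subst]
  exact (hval σ.1).symm.trans ((congrArg Subtype.val hσV).trans (hval σ.2))

noncomputable def wEquiv : Congruence (freeAlg (SigmaP W Sg) ℕ) :=
  (conseqCongr W ℕ).quotient (conseqCongr (SigmaP W Sg) ℕ)
    fun _ _ => Conseq.of_models_imp fun _ => models_sigmaP_of_models W Sg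

theorem quot_wEquiv_models : ((freeAlg (SigmaP W Sg) ℕ).quot (wEquiv W Sg)).Models W := by
  intro e he
  refine (Alg.quot_sat_iff _ _).mpr fun env => ?_
  rw [eval_freeAlg, eval_freeAlg]
  exact Congruence.quotient_rel_mk_mk.mpr (Conseq.subst (fun A hA => hA e he) _)

theorem subAlg_wEquiv_class_models (hbase : ∀ A : Alg S, A.Models V ↔ A.Models Sg)
    (a : (freeAlg (SigmaP W Sg) ℕ).carrier)
    (h : (freeAlg (SigmaP W Sg) ℕ).IsSubuniverse {b | (wEquiv W Sg).rel a b}) :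
    ((freeAlg (SigmaP W Sg) ℕ).subAlg _ h ⟨a, (wEquiv W Sg).iseqv.refl a⟩).Models V := by
  refine (hbase _).mpr fun σ hσ env => Subtype.ext ?_
  set r : ℕ → Term S ℕ := fun i => (env i).val.out
  have hr (i : ℕ) : Conseq W a.out (r i) := (env i).2
  have hidem (ω : S.symbols) : Conseq W (Term.app ω fun _ => r 0) (r 0) := by
    have hmem : (wEquiv W Sg).rel a (Quotient.mk _ (Term.app ω fun _ => r 0)) :=
      h ω (fun _ => (env 0).val) fun _ => (env 0).2
    exact (Congruence.quotient_rel_mk.mp hmem).symm.trans (hr 0)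
  have hσr : Conseq (SigmaP W Sg) (σ.1.subst r) (σ.2.subst r) := fun A hA =>
    hA _ (Set.mem_biUnion hσ ⟨r, fun i j => (hr i).symm.trans (hr j), hidem, rfl⟩)
  have hval := Alg.val_eval_subAlg _ h ⟨a, (wEquiv W Sg).iseqv.refl a⟩ env
  rw [hval, hval, eval_freeAlg, eval_freeAlg]
  exact Quotient.sound hσr

theorem freeAlg_sigmaP_inMaltsev (hbase : ∀ A : Alg S, A.Models V ↔ A.Models Sg) :
    InMaltsev V W (freeAlg (SigmaP W Sg) ℕ) :=
  ⟨wEquiv W Sg, quot_wEquiv_models W Sg, subAlg_wEquiv_class_models V W Sg hbase⟩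

end MaltsevProduct

theorem stmt_6_general (S : Signature)
    (V W : Set (Ident S)) (Sg : Set (Ident S))
    (hbase : ∀ A : Alg S, A.Models V ↔ A.Models Sg) :
    ∀ A : Alg S, A.Models (SigmaP W Sg) ↔
      ∀ u v : Term S ℕ, (∀ B : Alg S, InMaltsev V W B → B.sat u v) → A.sat u v :=
  fun A =>
    ⟨fun hA _ _ huv => conseq_of_freeAlg_sat (huv _ (freeAlg_sigmaP_inMaltsev V W Sg hbase)) A hA,
      fun hA e he => hA e.1 e.2 fun _ hB => models_sigmaP_of_inMaltsev V W Sg hbase hB e he⟩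

/-- If `Σ` is an equational base of the variety `V`, then the
variety `H(V ∘ W)` generated by the Mal'tsev product `V ∘ W` (i.e. the class of
models of all identities true throughout `V ∘ W`) is exactly the variety defined
by `Σᵖ`. -/
theorem stmt_6 (S : Signature) (h0 : ∀ ω : S.symbols, 0 < S.arity ω)
    (V W : Set (Ident S)) (Sg : Set (Ident S))
    (hbase : ∀ A : Alg S, A.Models V ↔ A.Models Sg) :
    ∀ A : Alg S, A.Models (SigmaP W Sg) ↔
      ∀ u v : Term S ℕ, (∀ B : Alg S, InMaltsev V W B → B.sat u v) → A.sat u v :=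
  stmt_6_general S V W Sg hbase
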